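/- arXiv:2204.00574 — 2 statements merged into one kernel-verified Lean document; each statement's English description precedes it below -/
import Mathlib

section
/- Let k ≥ 1 and let F : ℕ^k → ℂ be such that the multiple series ∑ (μ*F)(n₁,…,n_k)/(n₁⋯n_k) converges absolutely, where μ*F denotes k-variable Möbius inversion. Then (1/(x(log x)^{k-1})) ∑_{n₁⋯n_k ≤ x} F(n₁,…,n_k) → C_{F,k}/(k-1)! as x → ∞, where C_{F,k} is the sum of the series. -/
/-! Since `F = 1 * (μ * F)` in `k` variables, grouping the tuples `n = d * c` by `d` gives
`∑_{n₁⋯n_k ≤ x} F n = ∑_d (μ * F)(d) · D_k(x / (d₁⋯d_k))`, where `D_k(y)` (`countProdLe k y`)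
counts the positive `k`-tuples with product at most `y`. From `D_{k+1}(x) = ∑_{n ≤ x} D_k(x / n)`
and the comparison of `∑_{n ≤ x} (log x - log n)^k / n` with its integral `(log x)^{k+1} / (k+1)`,
induction on `k` gives `D_{k+1}(x) = x (log x)^k / k! + O(x (1 + log x)^{k-1})`. Hence, after
division by `x (log x)^{k-1}`, the `d`-th term tends to `(μ * F)(d) / (d₁⋯d_k (k-1)!)` and is
bounded by a constant multiple of `|(μ * F)(d)| / (d₁⋯d_k)`, so dominated convergence for series
applies. -/

open Finset Filter

noncomputable section

/-- The set of ordered `k`-tuples of positive integers with product `n`. -/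
def tuplesProd (k n : ℕ) : Finset (Fin k → ℕ) :=
  (Fintype.piFinset fun _ => n.divisors).filter fun v => ∏ i, v i = n

/-- The `k`-variable Möbius inversion `μ * F` (Dirichlet convolution in `k` variables
with the `k`-variable Möbius function `μ(n₁)⋯μ(n_k)`). -/
def mconv (k : ℕ) (F : (Fin k → ℕ) → ℂ) (n : Fin k → ℕ) : ℂ :=
  ∑ d ∈ Fintype.piFinset (fun i => (n i).divisors),
    (∏ i, ((ArithmeticFunction.moebius ((n i) / (d i)) : ℤ) : ℂ)) * F d

section

open ArithmeticFunction
open scoped ArithmeticFunction.Moebius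

variable {k : ℕ}

def piDivisors (n : Fin k → ℕ) : Finset (Fin k → ℕ) :=
  Fintype.piFinset fun i => (n i).divisors

lemma mem_piDivisors {n d : Fin k → ℕ} : d ∈ piDivisors n ↔ ∀ i, d i ∣ n i ∧ n i ≠ 0 := by
  simp [piDivisors]

lemma ne_zero_of_mem_piDivisors {n d : Fin k → ℕ} (h : d ∈ piDivisors n) (i : Fin k) :
    d i ≠ 0 :=
  Nat.ne_of_gt (Nat.pos_of_mem_divisors (Fintype.mem_piFinset.1 h i))

lemma Nat.mem_divisors_and_mem_divisors_div_iff {n d c : ℕ} :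
    d ∈ n.divisors ∧ c ∈ (n / d).divisors ↔ d * c ∈ n.divisors := by
  simp only [Nat.mem_divisors]
  refine ⟨fun ⟨⟨hdn, hn⟩, hc, _⟩ => ⟨(Nat.dvd_div_iff_mul_dvd hdn).1 hc, hn⟩,
    fun ⟨hdcn, hn⟩ => ?_⟩
  have hdn : d ∣ n := dvd_of_mul_right_dvd hdcn
  exact ⟨⟨hdn, hn⟩, (Nat.dvd_div_iff_mul_dvd hdn).2 hdcn,
    (Nat.div_ne_zero_iff_of_dvd hdn).2 ⟨hn, ne_zero_of_dvd_ne_zero hn hdn⟩⟩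

lemma mem_piDivisors_and_mem_piDivisors_div_iff {n d c : Fin k → ℕ} :
    d ∈ piDivisors n ∧ c ∈ piDivisors (n / d) ↔ d * c ∈ piDivisors n := by
  simp only [piDivisors, Fintype.mem_piFinset, Pi.div_apply, Pi.mul_apply, ← forall_and,
    Nat.mem_divisors_and_mem_divisors_div_iff]

lemma sum_sum_piDivisors_eq {M : Type*} [AddCommMonoid M] {s s' : Finset (Fin k → ℕ)}
    {t : (Fin k → ℕ) → Finset (Fin k → ℕ)} (f : (Fin k → ℕ) → (Fin k → ℕ) → M)
    (hs : ∀ v ∈ s, ∀ i, v i ≠ 0) (hs' : ∀ d ∈ s', ∀ i, d i ≠ 0)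
    (hmem : ∀ d c, d ∈ s' ∧ c ∈ t d ↔ d * c ∈ s) :
    ∑ v ∈ s, ∑ d ∈ piDivisors v, f d (v / d) = ∑ d ∈ s', ∑ c ∈ t d, f d c := by
  have hdiv {v d : Fin k → ℕ} (hd : d ∈ piDivisors v) : d * (v / d) = v :=
    funext fun i => Nat.mul_div_cancel' (mem_piDivisors.1 hd i).1
  rw [Finset.sum_sigma', Finset.sum_sigma']
  refine Finset.sum_nbij' (fun p => ⟨p.2, p.1 / p.2⟩) (fun p => ⟨p.1 * p.2, p.1⟩) ?_ ?_ ?_ ?_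
    fun _ _ => rfl
  · rintro ⟨v, d⟩ h
    rw [Finset.mem_sigma] at h
    exact Finset.mem_sigma.2 <| (hmem d _).2 (by rw [hdiv h.2]; exact h.1)
  · rintro ⟨d, c⟩ h
    rw [Finset.mem_sigma] at h
    have hdc := (hmem d c).1 h
    exact Finset.mem_sigma.2 ⟨hdc, mem_piDivisors.2 fun i => ⟨Dvd.intro _ rfl, hs _ hdc i⟩⟩
  · rintro ⟨v, d⟩ h
    rw [Finset.mem_sigma] at h
    dsimp only
    rw [hdiv h.2]
  · rintro ⟨d, c⟩ h
    rw [Finset.mem_sigma] at h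
    simp only [Sigma.mk.injEq, heq_eq_eq, true_and]
    exact funext fun i => Nat.mul_div_cancel_left _ (Nat.pos_of_ne_zero (hs' d h.1 i))

lemma sum_divisors_moebius {R : Type*} [Ring R] (n : ℕ) :
    ∑ d ∈ n.divisors, ((μ d : ℤ) : R) = if n = 1 then 1 else 0 := by
  have h := congrArg (· n) moebius_mul_coe_zeta
  simp only [coe_mul_zeta_apply, one_apply] at h
  rw [← Int.cast_sum, h]
  split_ifs <;> simp

lemma sum_piDivisors_prod_moebius {R : Type*} [CommRing R] (n : Fin k → ℕ) :
    ∑ c ∈ piDivisors n, ∏ i, ((μ (c i) : ℤ) : R) = if n = 1 then 1 else 0 := by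
  rw [piDivisors, ← Finset.prod_univ_sum (fun i => (n i).divisors) fun _ c => ((μ c : ℤ) : R)]
  simp only [sum_divisors_moebius, Finset.prod_boole, Finset.mem_univ, true_imp_iff, funext_iff,
    Pi.one_apply]

theorem sum_piDivisors_mconv (F : (Fin k → ℕ) → ℂ) {n : Fin k → ℕ} (hn : ∀ i, n i ≠ 0) :
    ∑ e ∈ piDivisors n, mconv k F e = F n := by
  calc ∑ e ∈ piDivisors n, mconv k F e
      = ∑ e ∈ piDivisors n, ∑ d ∈ piDivisors e, (∏ i, ((μ ((e / d) i) : ℤ) : ℂ)) * F d :=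
        Finset.sum_congr rfl fun _ _ => rfl
    _ = ∑ d ∈ piDivisors n, ∑ c ∈ piDivisors (n / d), (∏ i, ((μ (c i) : ℤ) : ℂ)) * F d :=
        sum_sum_piDivisors_eq (fun d c => (∏ i, ((μ (c i) : ℤ) : ℂ)) * F d)
          (fun _ => ne_zero_of_mem_piDivisors) (fun _ => ne_zero_of_mem_piDivisors)
          fun _ _ => mem_piDivisors_and_mem_piDivisors_div_iff
    _ = ∑ d ∈ piDivisors n, if d = n then F d else 0 := by
      refine Finset.sum_congr rfl fun d hd => ?_
      have hdiv : n / d = 1 ↔ d = n :=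
        ⟨fun h => funext fun i => Nat.eq_of_dvd_of_div_eq_one (mem_piDivisors.1 hd i).1
          (congrFun h i),
          by rintro rfl; exact funext fun i => Nat.div_self (Nat.pos_of_ne_zero (hn i))⟩
      rw [← Finset.sum_mul, sum_piDivisors_prod_moebius]
      simp only [hdiv, ite_mul, one_mul, zero_mul]
    _ = F n := by
      rw [Finset.sum_ite_eq', if_pos (mem_piDivisors.2 fun i => ⟨dvd_rfl, hn i⟩)]

end

section

variable {k : ℕ}

lemma Nat.le_and_le_div_iff_mul_le {a b N : ℕ} (ha : a ≠ 0) (hb : b ≠ 0) :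
    a ≤ N ∧ b ≤ N / a ↔ a * b ≤ N := by
  rw [Nat.le_div_iff_mul_le (Nat.pos_of_ne_zero ha), mul_comm b]
  exact ⟨And.right, fun h => ⟨(Nat.le_mul_of_pos_right a (Nat.pos_of_ne_zero hb)).trans h, h⟩⟩

def tuplesProdLe (k N : ℕ) : Finset (Fin k → ℕ) :=
  (Fintype.piFinset fun _ => Icc 1 N).filter fun v => ∏ i, v i ≤ N

lemma mem_tuplesProdLe {N : ℕ} {v : Fin k → ℕ} :
    v ∈ tuplesProdLe k N ↔ (∀ i, v i ≠ 0) ∧ ∏ i, v i ≤ N := by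
  simp only [tuplesProdLe, mem_filter, Fintype.mem_piFinset, mem_Icc, Nat.one_le_iff_ne_zero]
  refine ⟨fun ⟨h, hN⟩ => ⟨fun i => (h i).1, hN⟩, fun ⟨h, hN⟩ => ⟨fun i => ⟨h i, ?_⟩, hN⟩⟩
  exact (Finset.single_le_prod' (fun j _ => Nat.one_le_iff_ne_zero.2 (h j)) (mem_univ i)).trans hN

lemma tuplesProdLe_zero : tuplesProdLe k 0 = ∅ :=
  Finset.eq_empty_of_forall_notMem fun v hv => by
    obtain ⟨hv, h0⟩ := mem_tuplesProdLe.1 hv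
    exact Finset.prod_ne_zero_iff.2 (fun i _ => hv i) (Nat.le_zero.1 h0)

lemma mem_tuplesProd {n : ℕ} {v : Fin k → ℕ} :
    v ∈ tuplesProd k n ↔ (∀ i, v i ≠ 0) ∧ ∏ i, v i = n := by
  simp only [tuplesProd, mem_filter, Fintype.mem_piFinset, Nat.mem_divisors]
  refine ⟨fun ⟨h, hn⟩ => ⟨fun i => ne_zero_of_dvd_ne_zero (h i).2 (h i).1, hn⟩,
    fun ⟨h, hn⟩ => ⟨fun i => ⟨hn ▸ Finset.dvd_prod_of_mem v (mem_univ i), ?_⟩, hn⟩⟩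
  exact hn ▸ Finset.prod_ne_zero_iff.2 fun i _ => h i

lemma sum_Icc_sum_tuplesProd {M : Type*} [AddCommMonoid M] (F : (Fin k → ℕ) → M) (N : ℕ) :
    ∑ n ∈ Icc 1 N, ∑ v ∈ tuplesProd k n, F v = ∑ v ∈ tuplesProdLe k N, F v := by
  rw [← Finset.sum_fiberwise_of_maps_to (s := tuplesProdLe k N) (g := fun v => ∏ i, v i)
    (t := Icc 1 N)]
  · refine Finset.sum_congr rfl fun n hn => Finset.sum_congr ?_ fun _ _ => rfl
    ext v
    simp only [mem_filter, mem_tuplesProd, mem_tuplesProdLe]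
    exact ⟨fun ⟨h, hv⟩ => ⟨⟨h, hv ▸ (mem_Icc.1 hn).2⟩, hv⟩, fun ⟨⟨h, _⟩, hv⟩ => ⟨h, hv⟩⟩
  · intro v hv
    obtain ⟨h, hN⟩ := mem_tuplesProdLe.1 hv
    exact mem_Icc.2 ⟨Finset.one_le_prod' fun i _ => Nat.one_le_iff_ne_zero.2 (h i), hN⟩

lemma cons_mem_tuplesProdLe {n N : ℕ} {m : Fin k → ℕ} :
    (Fin.cons n m : Fin (k + 1) → ℕ) ∈ tuplesProdLe (k + 1) N ↔
      n ∈ Icc 1 N ∧ m ∈ tuplesProdLe k (N / n) := by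
  simp only [mem_tuplesProdLe, Fin.forall_fin_succ, Fin.cons_zero, Fin.cons_succ,
    Fin.prod_univ_succ, mem_Icc, Nat.one_le_iff_ne_zero]
  constructor
  · rintro ⟨⟨hn, hm⟩, hN⟩
    have h := (Nat.le_and_le_div_iff_mul_le hn (Finset.prod_ne_zero_iff.2 fun i _ => hm i)).2 hN
    exact ⟨⟨hn, h.1⟩, hm, h.2⟩
  · rintro ⟨⟨hn, hnN⟩, hm, hN⟩
    exact ⟨⟨hn, hm⟩,
      (Nat.le_and_le_div_iff_mul_le hn (Finset.prod_ne_zero_iff.2 fun i _ => hm i)).1 ⟨hnN, hN⟩⟩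

lemma card_tuplesProdLe_succ (N : ℕ) :
    #(tuplesProdLe (k + 1) N) = ∑ n ∈ Icc 1 N, #(tuplesProdLe k (N / n)) := by
  rw [← Finset.card_sigma]
  refine Finset.card_nbij' (fun v => ⟨v 0, Fin.tail v⟩) (fun p => Fin.cons p.1 p.2) ?_ ?_ ?_ ?_
  · intro v hv
    rw [Finset.mem_coe, ← Fin.cons_self_tail v, cons_mem_tuplesProdLe] at hv
    exact Finset.mem_sigma.2 hv
  · rintro ⟨n, m⟩ h
    exact cons_mem_tuplesProdLe.2 (Finset.mem_sigma.1 h)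
  · intro v _
    exact Fin.cons_self_tail v
  · rintro ⟨n, m⟩ _
    simp only [Fin.cons_zero, Fin.tail_cons]

lemma mem_tuplesProdLe_and_mem_tuplesProdLe_div_iff {N : ℕ} {d c : Fin k → ℕ} :
    d ∈ tuplesProdLe k N ∧ c ∈ tuplesProdLe k (N / ∏ i, d i) ↔ d * c ∈ tuplesProdLe k N := by
  simp only [mem_tuplesProdLe, Pi.mul_apply, Finset.prod_mul_distrib, mul_ne_zero_iff, forall_and]
  have hprod {v : Fin k → ℕ} (hv : ∀ i, v i ≠ 0) : ∏ i, v i ≠ 0 :=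
    Finset.prod_ne_zero_iff.2 fun i _ => hv i
  constructor
  · rintro ⟨⟨hd, hdN⟩, hc, hcN⟩
    exact ⟨⟨hd, hc⟩, (Nat.le_and_le_div_iff_mul_le (hprod hd) (hprod hc)).1 ⟨hdN, hcN⟩⟩
  · rintro ⟨⟨hd, hc⟩, hN⟩
    have h := (Nat.le_and_le_div_iff_mul_le (hprod hd) (hprod hc)).2 hN
    exact ⟨⟨hd, h.1⟩, hc, h.2⟩

theorem sum_tuplesProdLe_eq_sum_mconv (F : (Fin k → ℕ) → ℂ) (N : ℕ) :
    ∑ v ∈ tuplesProdLe k N, F v =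
      ∑ d ∈ tuplesProdLe k N, #(tuplesProdLe k (N / ∏ i, d i)) • mconv k F d := by
  have hne_zero (v) (hv : v ∈ tuplesProdLe k N) := (mem_tuplesProdLe.1 hv).1
  calc ∑ v ∈ tuplesProdLe k N, F v
      = ∑ v ∈ tuplesProdLe k N, ∑ d ∈ piDivisors v, mconv k F d :=
        Finset.sum_congr rfl fun v hv => (sum_piDivisors_mconv F (hne_zero v hv)).symm
    _ = ∑ d ∈ tuplesProdLe k N, ∑ _c ∈ tuplesProdLe k (N / ∏ i, d i), mconv k F d :=
        sum_sum_piDivisors_eq (fun d _ => mconv k F d) hne_zero hne_zero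
          fun _ _ => mem_tuplesProdLe_and_mem_tuplesProdLe_div_iff
    _ = _ := Finset.sum_congr rfl fun d _ => Finset.sum_const _

def countProdLe (k : ℕ) (x : ℝ) : ℝ := #(tuplesProdLe k ⌊x⌋₊)

lemma countProdLe_nonneg (k : ℕ) (x : ℝ) : 0 ≤ countProdLe k x := Nat.cast_nonneg _

lemma countProdLe_of_lt_one {x : ℝ} (hx : x < 1) : countProdLe k x = 0 := by
  simp [countProdLe, Nat.floor_eq_zero.2 hx, tuplesProdLe_zero]

lemma countProdLe_succ (x : ℝ) :
    countProdLe (k + 1) x = ∑ n ∈ Icc 1 ⌊x⌋₊, countProdLe k (x / n) := by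
  simp only [countProdLe, card_tuplesProdLe_succ, Nat.cast_sum, Nat.floor_div_natCast]

lemma countProdLe_one (x : ℝ) : countProdLe 1 x = ⌊x⌋₊ := by
  have h0 : ∀ n ∈ Icc 1 ⌊x⌋₊, countProdLe 0 (x / n) = 1 := fun n hn => by
    have : 1 ≤ ⌊x⌋₊ / n := (Nat.one_le_div_iff (mem_Icc.1 hn).1).2 (mem_Icc.1 hn).2
    simp [countProdLe, tuplesProdLe, Nat.floor_div_natCast, this]
  rw [countProdLe_succ, Finset.sum_congr rfl h0]
  simp

lemma div_prod_eq_zero_of_notMem_tuplesProdLe {N : ℕ} {d : Fin k → ℕ}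
    (hd : d ∉ tuplesProdLe k N) : N / ∏ i, d i = 0 := by
  rw [mem_tuplesProdLe, not_and_or, not_le] at hd
  rcases hd with hd | hd
  · obtain ⟨i, hi⟩ := not_forall_not.1 hd
    rw [Finset.prod_eq_zero (mem_univ i) hi, Nat.div_zero]
  · exact Nat.div_eq_of_lt hd

theorem sum_tuplesProdLe_eq_tsum (F : (Fin k → ℕ) → ℂ) (x : ℝ) :
    ∑ v ∈ tuplesProdLe k ⌊x⌋₊, F v = ∑' d, mconv k F d * countProdLe k (x / ↑(∏ i, d i)) := by
  rw [sum_tuplesProdLe_eq_sum_mconv, tsum_eq_sum (s := tuplesProdLe k ⌊x⌋₊)]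
  · refine Finset.sum_congr rfl fun d _ => ?_
    rw [nsmul_eq_mul, mul_comm, countProdLe, Nat.floor_div_natCast, Complex.ofReal_natCast]
  · intro d hd
    rw [countProdLe, Nat.floor_div_natCast, div_prod_eq_zero_of_notMem_tuplesProdLe hd,
      tuplesProdLe_zero, card_empty, Nat.cast_zero, Complex.ofReal_zero, mul_zero]

end

section

open Real

lemma abs_sum_Icc_floor_sub_integral_le {f : ℝ → ℝ} {x : ℝ} (hx : 1 ≤ x)
    (hf : AntitoneOn f (Set.Icc 1 x)) (hf0 : ∀ t ∈ Set.Icc 1 x, 0 ≤ f t) :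
    |∑ n ∈ Icc 1 ⌊x⌋₊, f n - ∫ t in (1 : ℝ)..x, f t| ≤ f 1 := by
  set M := ⌊x⌋₊
  have hM1 : 1 ≤ M := Nat.le_floor (by exact_mod_cast hx)
  have hM1' : (1 : ℝ) ≤ M := by exact_mod_cast hM1
  have hMx : (M : ℝ) ≤ x := Nat.floor_le (by linarith)
  have hxM : x < M + 1 := Nat.lt_floor_add_one x
  have hint {a b : ℝ} (ha : 1 ≤ a) (hab : a ≤ b) (hb : b ≤ x) :
      IntervalIntegrable f MeasureTheory.volume a b :=
    (hf.mono (by rw [Set.uIcc_of_le hab]; exact Set.Icc_subset_Icc ha hb)).intervalIntegrable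
  have hfM : AntitoneOn f (Set.Icc ((1 : ℕ) : ℝ) M) := hf.mono (Set.Icc_subset_Icc (by simp) hMx)
  have hsplit : ∫ t in (1 : ℝ)..x, f t = (∫ t in (1 : ℝ)..M, f t) + ∫ t in (M : ℝ)..x, f t :=
    (intervalIntegral.integral_add_adjacent_intervals (hint le_rfl hM1' hMx)
      (hint hM1' hMx le_rfl)).symm
  have htail_nonneg : 0 ≤ ∫ t in (M : ℝ)..x, f t :=
    intervalIntegral.integral_nonneg hMx fun t ht => hf0 t ⟨hM1'.trans ht.1, ht.2⟩
  have htail_le : ∫ t in (M : ℝ)..x, f t ≤ f M :=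
    calc ∫ t in (M : ℝ)..x, f t ≤ ∫ _ in (M : ℝ)..x, f M :=
          intervalIntegral.integral_mono_on hMx (hint hM1' hMx le_rfl) intervalIntegrable_const
            fun t ht => hf ⟨hM1', hMx⟩ ⟨hM1'.trans ht.1, ht.2⟩ ht.1
      _ = (x - M) * f M := by rw [intervalIntegral.integral_const, smul_eq_mul]
      _ ≤ f M := mul_le_of_le_one_left (hf0 _ ⟨hM1', hMx⟩) (by linarith)
  have hupper : ∑ n ∈ Ico 1 M, f ↑(n + 1) ≤ ∫ t in (1 : ℝ)..M, f t := by
    simpa using AntitoneOn.sum_le_integral_Ico hM1 hfM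
  have hlower : ∫ t in (1 : ℝ)..M, f t ≤ ∑ n ∈ Ico 1 M, f n := by
    simpa using AntitoneOn.integral_le_sum_Ico hM1 hfM
  have hsum_bot : ∑ n ∈ Icc 1 M, f n = f 1 + ∑ n ∈ Ico 1 M, f ↑(n + 1) := by
    rw [← Finset.Ico_add_one_right_eq_Icc, Finset.sum_eq_sum_Ico_succ_bot (by omega),
      Finset.sum_Ico_add' (fun n : ℕ => f n)]
    simp
  have hsum_top : ∑ n ∈ Icc 1 M, f n = ∑ n ∈ Ico 1 M, f n + f M := by
    rw [← Finset.Ico_add_one_right_eq_Icc, Finset.sum_Ico_succ_top hM1]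
  rw [abs_le]
  constructor <;> linarith [hf0 _ ⟨hM1', hMx⟩]

lemma antitoneOn_log_sub_pow_div (p : ℕ) (x : ℝ) :
    AntitoneOn (fun t => (log x - log t) ^ p / t) (Set.Icc 1 x) := by
  intro a ha b hb hab
  have ha0 : 0 < a := one_pos.trans_le ha.1
  have hb_le : 0 ≤ log x - log b := sub_nonneg.2 (log_le_log (ha0.trans_le hab) hb.2)
  have hab_log : log x - log b ≤ log x - log a := sub_le_sub_left (log_le_log ha0 hab) _
  exact div_le_div₀ (pow_nonneg (hb_le.trans hab_log) p) (pow_le_pow_left₀ hb_le hab_log p) ha0 hab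

lemma integral_log_sub_pow_div (p : ℕ) {x : ℝ} (hx : 1 ≤ x) :
    ∫ t in (1 : ℝ)..x, (log x - log t) ^ p / t = log x ^ (p + 1) / (p + 1) := by
  have hderiv : ∀ t ∈ Set.uIcc 1 x, HasDerivAt (fun t => -(log x - log t) ^ (p + 1) / (p + 1))
      ((log x - log t) ^ p / t) t := by
    intro t ht
    have ht0 : t ≠ 0 := (one_pos.trans_le (Set.uIcc_of_le hx ▸ ht).1).ne'
    refine ((((hasDerivAt_log ht0).const_sub (log x)).fun_pow (p + 1)).fun_neg.div_const
      ((p : ℝ) + 1)).congr_deriv ?_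
    field_simp
    simp
  rw [intervalIntegral.integral_eq_sub_of_hasDerivAt hderiv
    ((antitoneOn_log_sub_pow_div p x).mono (Set.uIcc_of_le hx).subset).intervalIntegrable]
  simp [neg_div]

lemma abs_sum_log_sub_pow_div_sub_le (p : ℕ) {x : ℝ} (hx : 1 ≤ x) :
    |∑ n ∈ Icc 1 ⌊x⌋₊, (log x - log n) ^ p / n - log x ^ (p + 1) / (p + 1)| ≤ log x ^ p := by
  have h := abs_sum_Icc_floor_sub_integral_le hx (antitoneOn_log_sub_pow_div p x)
    fun t ht => div_nonneg (pow_nonneg (sub_nonneg.2 (log_le_log (one_pos.trans_le ht.1) ht.2)) p)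
      (zero_le_one.trans ht.1)
  rwa [integral_log_sub_pow_div p hx, log_one, sub_zero, div_one] at h

lemma sum_Icc_floor_inv_le {x : ℝ} (hx : 1 ≤ x) : ∑ n ∈ Icc 1 ⌊x⌋₊, (n : ℝ)⁻¹ ≤ 1 + log x := by
  have h := abs_sum_log_sub_pow_div_sub_le 0 hx
  simp only [pow_zero, one_div, zero_add, Nat.cast_zero, div_one, pow_one] at h
  linarith [(abs_le.1 h).2]

lemma mul_log_pow_div_factorial_le (k : ℕ) {x : ℝ} (hx : 1 ≤ x) :
    x * log x ^ k / k.factorial ≤ x * (1 + log x) ^ k := by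
  have hlog := log_nonneg hx
  calc x * log x ^ k / k.factorial ≤ x * log x ^ k :=
        div_le_self (by positivity) (by exact_mod_cast k.factorial_pos)
    _ ≤ x * (1 + log x) ^ k := by gcongr; linarith

lemma abs_countProdLe_succ_sub_le (k : ℕ) {x : ℝ} (hx : 1 ≤ x) :
    |countProdLe (k + 2) x - x * log x ^ (k + 1) / (k + 1).factorial| ≤
      ∑ n ∈ Icc 1 ⌊x⌋₊, |countProdLe (k + 1) (x / n) - x / n * log (x / n) ^ k / k.factorial| +
        x * log x ^ k / k.factorial := by
  have hx0 : 0 < x := one_pos.trans_le hx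
  set S := ∑ n ∈ Icc 1 ⌊x⌋₊, (log x - log n) ^ k / n
  have hmain : ∑ n ∈ Icc 1 ⌊x⌋₊, x / n * log (x / n) ^ k / k.factorial = x / k.factorial * S := by
    rw [Finset.mul_sum]
    refine Finset.sum_congr rfl fun n hn => ?_
    rw [log_div hx0.ne' (by exact_mod_cast (Nat.one_le_iff_ne_zero.1 (mem_Icc.1 hn).1))]
    ring
  have hsplit : countProdLe (k + 2) x - x * log x ^ (k + 1) / (k + 1).factorial =
      ∑ n ∈ Icc 1 ⌊x⌋₊, (countProdLe (k + 1) (x / n) - x / n * log (x / n) ^ k / k.factorial) +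
        x / k.factorial * (S - log x ^ (k + 1) / (k + 1)) := by
    rw [countProdLe_succ, Finset.sum_sub_distrib, hmain, Nat.factorial_succ]
    push_cast
    field_simp
    ring
  calc |countProdLe (k + 2) x - x * log x ^ (k + 1) / (k + 1).factorial|
      ≤ ∑ n ∈ Icc 1 ⌊x⌋₊, |countProdLe (k + 1) (x / n) - x / n * log (x / n) ^ k / k.factorial| +
          x / k.factorial * log x ^ k := by
        rw [hsplit]
        refine (abs_add_le _ _).trans (add_le_add (Finset.abs_sum_le_sum_abs _ _) ?_)
        rw [abs_mul, abs_of_nonneg (by positivity)]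
        exact mul_le_mul_of_nonneg_left (abs_sum_log_sub_pow_div_sub_le k hx) (by positivity)
    _ = _ := by ring

theorem abs_countProdLe_sub_le (m : ℕ) : ∃ C, 0 ≤ C ∧ ∀ x : ℝ, 1 ≤ x →
    |countProdLe (m + 2) x - x * log x ^ (m + 1) / (m + 1).factorial| ≤
      C * x * (1 + log x) ^ m := by
  induction m with
  | zero =>
    refine ⟨2, zero_le_two, fun x hx => (abs_countProdLe_succ_sub_le 0 hx).trans ?_⟩
    have hfloor : ∑ n ∈ Icc 1 ⌊x⌋₊, |(⌊x / n⌋₊ : ℝ) - x / n| ≤ x :=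
      calc ∑ n ∈ Icc 1 ⌊x⌋₊, |(⌊x / n⌋₊ : ℝ) - x / n| ≤ ∑ n ∈ Icc 1 ⌊x⌋₊, 1 :=
            Finset.sum_le_sum fun n _ => by
              rw [abs_sub_comm, abs_of_nonneg (sub_nonneg.2 (Nat.floor_le (by positivity)))]
              linarith [Nat.lt_floor_add_one (x / n)]
        _ ≤ x := by simpa using Nat.floor_le (one_pos.le.trans hx)
    simp only [zero_add, countProdLe_one, pow_zero, Nat.factorial_zero, Nat.cast_one, mul_one,
      div_one]
    linarith
  | succ m ih =>
    obtain ⟨C, hC0, hC⟩ := ih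
    refine ⟨C + 1, by linarith, fun x hx => (abs_countProdLe_succ_sub_le (m + 1) hx).trans ?_⟩
    have hx0 : 0 < x := one_pos.trans_le hx
    have hlog := log_nonneg hx
    have hterms : ∑ n ∈ Icc 1 ⌊x⌋₊,
        |countProdLe (m + 2) (x / n) - x / n * log (x / n) ^ (m + 1) / (m + 1).factorial| ≤
          C * x * (1 + log x) ^ m * ∑ n ∈ Icc 1 ⌊x⌋₊, (n : ℝ)⁻¹ := by
      rw [Finset.mul_sum]
      refine Finset.sum_le_sum fun n hn => ?_
      have hn1 : (1 : ℝ) ≤ n := by exact_mod_cast (mem_Icc.1 hn).1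
      have hnx : (n : ℝ) ≤ x := (Nat.cast_le.2 (mem_Icc.1 hn).2).trans (Nat.floor_le hx0.le)
      have hxn : 1 ≤ x / n := (one_le_div (by linarith)).2 hnx
      calc _ ≤ C * (x / n) * (1 + log (x / n)) ^ m := hC _ hxn
        _ ≤ C * (x / n) * (1 + log x) ^ m := by
          gcongr
          · linarith [log_nonneg hxn]
          · exact div_le_self hx0.le hn1
        _ = _ := by ring
    calc _ ≤ C * x * (1 + log x) ^ m * (1 + log x) + x * (1 + log x) ^ (m + 1) :=
          add_le_add (hterms.trans (mul_le_mul_of_nonneg_left (sum_Icc_floor_inv_le hx)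
            (by positivity))) (mul_log_pow_div_factorial_le (m + 1) hx)
      _ = (C + 1) * x * (1 + log x) ^ (m + 1) := by ring

lemma countProdLe_le (k : ℕ) : ∃ B, 0 ≤ B ∧ ∀ x : ℝ, 1 ≤ x →
    countProdLe (k + 1) x ≤ B * x * (1 + log x) ^ k := by
  cases k with
  | zero =>
    refine ⟨1, zero_le_one, fun x hx => ?_⟩
    simpa [countProdLe_one] using Nat.floor_le (zero_le_one.trans hx)
  | succ m =>
    obtain ⟨C, hC0, hC⟩ := abs_countProdLe_sub_le m
    refine ⟨C + 1, by linarith, fun x hx => ?_⟩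
    have hlog := log_nonneg hx
    have hpow : C * x * (1 + log x) ^ m ≤ C * x * (1 + log x) ^ (m + 1) := by
      gcongr
      · exact le_add_of_nonneg_right hlog
      · omega
    linarith [(abs_le.1 (hC x hx)).2, mul_log_pow_div_factorial_le (m + 1) hx]

theorem tendsto_countProdLe (k : ℕ) :
    Tendsto (fun x => countProdLe (k + 1) x / (x * log x ^ k)) atTop
      (nhds (1 / k.factorial)) := by
  cases k with
  | zero => simpa [countProdLe_one] using tendsto_nat_floor_div_atTop
  | succ m =>
    obtain ⟨C, hC0, hC⟩ := abs_countProdLe_sub_le m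
    refine tendsto_sub_nhds_zero_iff.1 (squeeze_zero_norm' ?_
      ((tendsto_const_nhds (x := C * 2 ^ m)).div_atTop tendsto_log_atTop))
    filter_upwards [eventually_ge_atTop (exp 1)] with x hx
    have hx0 : 0 < x := (exp_pos 1).trans_le hx
    have hlog : 1 ≤ log x := (le_log_iff_exp_le hx0).2 hx
    have hden : 0 < x * log x ^ (m + 1) := by positivity
    have hsplit : countProdLe (m + 2) x / (x * log x ^ (m + 1)) - 1 / ((m + 1).factorial : ℝ) =
        (countProdLe (m + 2) x - x * log x ^ (m + 1) / (m + 1).factorial) /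
          (x * log x ^ (m + 1)) := by
      field_simp
    rw [Real.norm_eq_abs, hsplit, abs_div, abs_of_pos hden, div_le_iff₀ hden]
    calc _ ≤ C * x * (1 + log x) ^ m := hC x ((one_le_exp zero_le_one).trans hx)
      _ ≤ C * x * (2 * log x) ^ m := by gcongr; linarith
      _ = C * 2 ^ m / log x * (x * log x ^ (m + 1)) := by field_simp; ring

theorem tendsto_countProdLe_div (k q : ℕ) :
    Tendsto (fun x => countProdLe (k + 1) (x / q) / (x * log x ^ k)) atTop
      (nhds (1 / (q * k.factorial))) := by
  -- For `q = 0` both sides vanish, as `x / 0 = 0` and `1 / 0 = 0`.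
  rcases q.eq_zero_or_pos with rfl | hq
  · simp [countProdLe_of_lt_one]
  have hq0 : (0 : ℝ) < q := Nat.cast_pos.2 hq
  have hratio : Tendsto (fun x => log (x / q) / log x) atTop (nhds 1) := by
    have h := (tendsto_const_nhds (x := log q)).div_atTop tendsto_log_atTop
    have h' : Tendsto (fun x => 1 - log q / log x) atTop (nhds 1) := by
      simpa using tendsto_const_nhds.sub h
    refine h'.congr' ?_
    filter_upwards [eventually_gt_atTop 1] with x hx
    rw [log_div (by linarith) hq0.ne', sub_div, div_self (log_pos hx).ne']
  have h := (((tendsto_countProdLe k).comp (tendsto_id.atTop_div_const hq0)).mul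
    (hratio.pow k)).div_const q
  rw [one_pow, mul_one, div_div, mul_comm] at h
  refine h.congr' ?_
  filter_upwards [eventually_gt_atTop (q : ℝ)] with x hx
  have hxq : 1 < x / q := (one_lt_div hq0).2 hx
  have hlog_xq := log_pos hxq
  have hlog_x : 0 < log x := log_pos (by linarith [(Nat.one_le_cast (α := ℝ)).2 hq])
  simp only [Function.comp_apply, id, div_pow]
  field_simp

theorem countProdLe_div_div_le (k : ℕ) : ∃ B, ∀ x : ℝ, exp 1 ≤ x → ∀ q : ℕ,
    countProdLe (k + 1) (x / q) / (x * log x ^ k) ≤ B / q := by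
  obtain ⟨B, hB0, hB⟩ := countProdLe_le k
  refine ⟨2 ^ k * B, fun x hx q => ?_⟩
  have hx0 : 0 < x := (exp_pos 1).trans_le hx
  have hlog : 1 ≤ log x := (le_log_iff_exp_le hx0).2 hx
  have hden : 0 < x * log x ^ k := by positivity
  rw [div_le_iff₀ hden]
  by_cases hxq : 1 ≤ x / q
  · have hq : (1 : ℝ) ≤ q := by
      rcases q.eq_zero_or_pos with rfl | hq
      · norm_num at hxq
      · exact Nat.one_le_cast.2 hq
    calc countProdLe (k + 1) (x / q) ≤ B * (x / q) * (1 + log (x / q)) ^ k := hB _ hxq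
      _ ≤ B * (x / q) * (2 * log x) ^ k := by
        gcongr
        · linarith [log_nonneg hxq]
        · linarith [log_le_log (by positivity) (div_le_self hx0.le hq)]
      _ = 2 ^ k * B / q * (x * log x ^ k) := by ring
  · rw [countProdLe_of_lt_one (not_le.1 hxq)]
    positivity

end

theorem hyperbolic_wintner (k : ℕ) (hk : 1 ≤ k) (F : (Fin k → ℕ) → ℂ)
    (habs : Summable fun v : Fin k → ℕ => ‖mconv k F v‖ / ∏ i, (v i : ℝ)) :
    Tendsto (fun x : ℝ =>
        (∑ n ∈ Finset.Icc 1 ⌊x⌋₊, ∑ v ∈ tuplesProd k n, F v) /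
          ((x * Real.log x ^ (k - 1) : ℝ) : ℂ))
      atTop
      (nhds ((∑' v : Fin k → ℕ, mconv k F v / ∏ i, (v i : ℂ)) /
        (Nat.factorial (k - 1) : ℂ))) := by
  obtain ⟨m, rfl⟩ : ∃ m, k = m + 1 := ⟨k - 1, by omega⟩
  obtain ⟨B, hB⟩ := countProdLe_div_div_le m
  have hseries (x : ℝ) : (∑ n ∈ Icc 1 ⌊x⌋₊, ∑ v ∈ tuplesProd (m + 1) n, F v) /
      ((x * Real.log x ^ m : ℝ) : ℂ) = ∑' d, mconv (m + 1) F d *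
        ((countProdLe (m + 1) (x / ↑(∏ i, d i)) / (x * Real.log x ^ m) : ℝ) : ℂ) := by
    rw [sum_Icc_sum_tuplesProd, sum_tuplesProdLe_eq_tsum, ← tsum_div_const]
    simp only [Complex.ofReal_div, mul_div_assoc]
  simp only [Nat.add_sub_cancel, hseries, ← tsum_div_const]
  refine tendsto_tsum_of_dominated_convergence (habs.mul_left B) (fun d => ?_) ?_
  · convert ((tendsto_countProdLe_div m (∏ i, d i)).ofReal).const_mul (mconv (m + 1) F d) using 2
    push_cast
    ring
  · filter_upwards [eventually_ge_atTop (Real.exp 1)] with x hx d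
    have hx1 : 1 ≤ x := (Real.one_le_exp zero_le_one).trans hx
    have hlog : 0 ≤ Real.log x := Real.log_nonneg hx1
    rw [norm_mul, Complex.norm_real, Real.norm_of_nonneg
      (div_nonneg (countProdLe_nonneg _ _) (by positivity))]
    calc _ ≤ ‖mconv (m + 1) F d‖ * (B / ↑(∏ i, d i)) :=
          mul_le_mul_of_nonneg_left (hB x hx _) (norm_nonneg _)
      _ = _ := by push_cast; ring
end
end

section
/- For every k ≥ 2 and n ≥ 1, ∑_{n₁⋯n_k = n} τ(lcm(n₁,…,n_k)) = ∑_{j d₁⋯d_k = n} g_k(d₁,…,d_k) τ_{2k}(j), where g_k is the k-variable arithmetic function determined by τ(lcm(n₁,…,n_k)) = ∑_{j₁d₁ = n₁, …, j_k d_k = n_k} τ(j₁)⋯τ(j_k) g_k(d₁,…,d_k). -/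
/-!
Substituting the defining relation of `g` for every `τ(lcm v)` and writing `v i = j i * d i` turns
the left side into a sum of `(∏ i, τ (j i)) * g d` over pairs of tuples with `∏ i, j i * d i = n`.
Grouping by `J = ∏ i, j i`, the inner sum `∑_{j₁⋯j_k = J} ∏ τ(jᵢ)` counts the factorizations of
`J` into `2k` factors, obtained by splitting each `jᵢ` into two: it is `τ_{2k}(J)`.
-/

open Finset Filter

noncomputable section

/-- The Piltz divisor function `τ_k`. -/
def piltz (k n : ℕ) : ℕ := (tuplesProd k n).card

theorem tuplesProd_eq_finMulAntidiag (k n : ℕ) : tuplesProd k n = Nat.finMulAntidiag k n := by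
  obtain rfl | hn := eq_or_ne n 0
  · rw [Nat.finMulAntidiag_zero_right, tuplesProd, filter_eq_empty_iff]
    intro v hv hprod
    obtain ⟨i, -, -⟩ := Finset.prod_eq_zero_iff.mp hprod
    simpa using Fintype.mem_piFinset.mp hv i
  · exact (Nat.finMulAntidiag_eq_piFinset_divisors_filter dvd_rfl hn).symm

theorem card_finMulAntidiag_two (m : ℕ) : #(Nat.finMulAntidiag 2 m) = #m.divisors :=
  calc #(Nat.finMulAntidiag 2 m)
      = #((Nat.finMulAntidiag 2 m).image (piFinTwoEquiv fun _ => ℕ)) :=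
        (card_image_of_injective _ (Equiv.injective _)).symm
    _ = #m.divisorsAntidiagonal := by rw [Nat.image_piFinTwoEquiv_finMulAntidiag]
    _ = #m.divisors := by rw [← Nat.map_div_right_divisors, card_map]

theorem card_finMulAntidiag_mul (m k J : ℕ) :
    #(Nat.finMulAntidiag (m * k) J) =
      ∑ j ∈ Nat.finMulAntidiag k J, ∏ i, #(Nat.finMulAntidiag m (j i)) := by
  simp_rw [← Fintype.card_piFinset, ← card_sigma]
  obtain rfl | hJ := eq_or_ne J 0
  · simp
  let e : Fin m × Fin k ≃ Fin (m * k) := finProdFinEquiv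
  have hprod_e : ∀ w : Fin (m * k) → ℕ, ∏ t, w t = ∏ b, ∏ a, w (e (a, b)) := fun w => by
    rw [← e.prod_comp, Fintype.prod_prod_type, Finset.prod_comm]
  symm
  refine card_nbij' (fun x t => x.2 (e.symm t).2 (e.symm t).1)
    (fun w => ⟨fun b => ∏ a, w (e (a, b)), fun b a => w (e (a, b))⟩) ?_ ?_ ?_ ?_
  · rintro ⟨j, u⟩ hx
    simp only [coe_sigma, Set.mem_sigma_iff, mem_coe, Fintype.mem_piFinset,
      Nat.mem_finMulAntidiag] at hx ⊢
    refine ⟨?_, hJ⟩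
    simp [hprod_e, fun b => (hx.2 b).1, hx.1.1]
  · intro w hw
    simp only [coe_sigma, Set.mem_sigma_iff, mem_coe, Fintype.mem_piFinset,
      Nat.mem_finMulAntidiag] at hw ⊢
    refine ⟨⟨(hprod_e w).symm.trans hw.1, hJ⟩, fun b => ⟨trivial, ?_⟩⟩
    exact prod_ne_zero_iff.mpr fun a _ => prod_ne_zero_iff.mp (hw.1 ▸ hJ) _ (mem_univ _)
  · rintro ⟨j, u⟩ hx
    simp only [coe_sigma, Set.mem_sigma_iff, mem_coe, Fintype.mem_piFinset] at hx
    simp [Equiv.symm_apply_apply, fun b => Nat.prod_eq_of_mem_finMulAntidiag (hx.2 b)]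
  · intro w _
    simp

theorem sum_prod_card_divisors_eq_piltz (k J : ℕ) :
    ∑ j ∈ Nat.finMulAntidiag k J, ∏ i, #(j i).divisors = piltz (2 * k) J := by
  simp only [piltz, tuplesProd_eq_finMulAntidiag, card_finMulAntidiag_mul, card_finMulAntidiag_two]

theorem sum_finMulAntidiag_sum_divisors {M : Type*} [AddCommMonoid M] (k n : ℕ)
    (f : (Fin k → ℕ) → (Fin k → ℕ) → M) :
    ∑ v ∈ Nat.finMulAntidiag k n, ∑ d ∈ Fintype.piFinset (fun i => (v i).divisors), f (v / d) d =
      ∑ p ∈ ((n.divisors ×ˢ Fintype.piFinset fun _ : Fin k => n.divisors).filter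
          fun p => p.1 * ∏ i, p.2 i = n),
        ∑ j ∈ Nat.finMulAntidiag k p.1, f j p.2 := by
  rw [sum_sigma', sum_sigma']
  refine sum_nbij' (fun x => ⟨(∏ i, (x.1 / x.2) i, x.2), x.1 / x.2⟩)
    (fun y => ⟨y.2 * y.1.2, y.1.2⟩) ?_ ?_ ?_ ?_ fun _ _ => rfl
  · rintro ⟨v, d⟩ hx
    simp only [mem_sigma, Fintype.mem_piFinset, Nat.mem_finMulAntidiag, Nat.mem_divisors] at hx
    obtain ⟨⟨hv, hn⟩, hdv⟩ := hx
    have hprod : (∏ i, (v / d) i) * ∏ i, d i = n := by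
      rw [← prod_mul_distrib, ← hv]
      exact prod_congr rfl fun i _ => Nat.div_mul_cancel (hdv i).1
    simp only [mem_sigma, mem_filter, mem_product, Fintype.mem_piFinset, Nat.mem_finMulAntidiag,
      Nat.mem_divisors]
    refine ⟨⟨⟨⟨Dvd.intro _ hprod, hn⟩, fun i => ⟨(hdv i).1.trans ?_, hn⟩⟩, hprod⟩, trivial,
      left_ne_zero_of_mul (hprod ▸ hn)⟩
    exact hv ▸ dvd_prod_of_mem v (mem_univ i)
  · rintro ⟨⟨J, d⟩, j⟩ hy
    simp only [mem_sigma, mem_filter, mem_product, Fintype.mem_piFinset] at hy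
    obtain ⟨⟨⟨hJ, hd⟩, hJd⟩, hj⟩ := hy
    have hn : n ≠ 0 := Nat.ne_zero_of_mem_divisors hJ
    refine mem_sigma.mpr ⟨Nat.mem_finMulAntidiag.mpr ⟨?_, hn⟩, Fintype.mem_piFinset.mpr fun i =>
      Nat.mem_divisors.mpr ⟨dvd_mul_left _ _, mul_ne_zero (Nat.ne_zero_of_mem_finMulAntidiag hj i)
        (Nat.pos_of_mem_divisors (hd i)).ne'⟩⟩
    simp only [Pi.mul_apply, prod_mul_distrib, Nat.prod_eq_of_mem_finMulAntidiag hj, hJd]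
  · rintro ⟨v, d⟩ hx
    simp only [mem_sigma, Fintype.mem_piFinset, Nat.mem_divisors] at hx
    have hvd : v / d * d = v := funext fun i => Nat.div_mul_cancel (hx.2 i).1
    dsimp only
    rw [hvd]
  · rintro ⟨⟨J, d⟩, j⟩ hy
    simp only [mem_sigma, mem_filter, mem_product, Fintype.mem_piFinset] at hy
    have hjd : j * d / d = j := funext fun i =>
      Nat.mul_div_cancel (j i) (Nat.pos_of_mem_divisors (hy.1.1.2 i))
    dsimp only
    rw [hjd, Nat.prod_eq_of_mem_finMulAntidiag hy.2]

theorem sum_tau_lcm_eq_general (k : ℕ) (n : ℕ)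
    (g : (Fin k → ℕ) → ℂ)
    (hg : ∀ v : Fin k → ℕ, (∀ i, 0 < v i) →
      ((Finset.univ.lcm v).divisors.card : ℂ) =
        ∑ d ∈ Fintype.piFinset (fun i => (v i).divisors),
          (∏ i, ((v i / d i).divisors.card : ℂ)) * g d) :
    ∑ v ∈ tuplesProd k n, ((Finset.univ.lcm v).divisors.card : ℂ) =
      ∑ p ∈ ((n.divisors ×ˢ Fintype.piFinset fun _ : Fin k => n.divisors).filter
          fun p => p.1 * ∏ i, p.2 i = n),
        g p.2 * (piltz (2 * k) p.1 : ℂ) := by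
  calc ∑ v ∈ tuplesProd k n, ((Finset.univ.lcm v).divisors.card : ℂ)
      = ∑ v ∈ Nat.finMulAntidiag k n, ∑ d ∈ Fintype.piFinset (fun i => (v i).divisors),
          (∏ i, (((v / d) i).divisors.card : ℂ)) * g d := by
        rw [tuplesProd_eq_finMulAntidiag]
        exact sum_congr rfl fun v hv =>
          hg v fun i => (Nat.ne_zero_of_mem_finMulAntidiag hv i).bot_lt
    _ = ∑ p ∈ ((n.divisors ×ˢ Fintype.piFinset fun _ : Fin k => n.divisors).filter
          fun p => p.1 * ∏ i, p.2 i = n),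
          ∑ j ∈ Nat.finMulAntidiag k p.1, (∏ i, ((j i).divisors.card : ℂ)) * g p.2 :=
        sum_finMulAntidiag_sum_divisors k n fun j d => (∏ i, ((j i).divisors.card : ℂ)) * g d
    _ = _ := by
        refine sum_congr rfl fun p _ => ?_
        rw [← sum_mul, mul_comm, ← sum_prod_card_divisors_eq_piltz]
        push_cast
        rfl

theorem sum_tau_lcm_eq (k : ℕ) (hk : 2 ≤ k) (n : ℕ) (hn : 1 ≤ n)
    (g : (Fin k → ℕ) → ℂ)
    (hg : ∀ v : Fin k → ℕ, (∀ i, 0 < v i) →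
      ((Finset.univ.lcm v).divisors.card : ℂ) =
        ∑ d ∈ Fintype.piFinset (fun i => (v i).divisors),
          (∏ i, ((v i / d i).divisors.card : ℂ)) * g d) :
    ∑ v ∈ tuplesProd k n, ((Finset.univ.lcm v).divisors.card : ℂ) =
      ∑ p ∈ ((n.divisors ×ˢ Fintype.piFinset fun _ : Fin k => n.divisors).filter
          fun p => p.1 * ∏ i, p.2 i = n),
        g p.2 * (piltz (2 * k) p.1 : ℂ) :=
  sum_tau_lcm_eq_general k n g hg
end
end
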